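/- arXiv:math/0303086 — 2 statements merged into one kernel-verified Lean document; each statement's English description precedes it below -/
import Mathlib

section
/- Let (R,m) be a Noetherian local ring with m³ = (0) and m² ≠ (0), and suppose M is a finitely generated indecomposable nonfree R-module of G-dimension zero. Then m²M = 0. -/
open CategoryTheory

noncomputable abbrev ExtGrp (R : Type) [CommRing R] (M N : Type) [AddCommGroup M] [Module R M]
    [AddCommGroup N] [Module R N] (i : ℕ) : Type :=
  ((Ext R (ModuleCat R) i).obj (Opposite.op (ModuleCat.of R M))).obj (ModuleCat.of R N)

/-- G-dimension zero. -/
def GDimZero (R : Type) [CommRing R] (M : Type) [AddCommGroup M] [Module R M] : Prop :=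
  Function.Bijective (Module.Dual.eval R M) ∧
  (∀ i : ℕ, 0 < i → Subsingleton (ExtGrp R M R i)) ∧
  (∀ i : ℕ, 0 < i → Subsingleton (ExtGrp R (Module.Dual R M) R i))

/-- finite self-injective dimension -/
def HasFiniteSelfInjDim (R : Type) [CommRing R] : Prop :=
  ∃ n : ℕ, ∀ (N : ModuleCat R) (i : ℕ), n < i →
    Subsingleton (((Ext R (ModuleCat R) i).obj (Opposite.op N)).obj (ModuleCat.of R R))

/-- Gorenstein local ring -/
def IsGorensteinLocalRing (R : Type) [CommRing R] : Prop :=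
  IsNoetherianRing R ∧ IsLocalRing R ∧ HasFiniteSelfInjDim R

/-- length of a module, as Krull dimension of its submodule lattice -/
noncomputable def mlength (R : Type) [CommRing R] (M : Type) [AddCommGroup M] [Module R M] :
    WithBot ℕ∞ :=
  Order.krullDim (Submodule R M)

/-- An indecomposable (nonzero) module: it is not a direct sum of two proper submodules. -/
def IsIndecomposableModule (R : Type) [CommRing R] (M : Type) [AddCommGroup M]
    [Module R M] : Prop :=
  (⊥ : Submodule R M) ≠ ⊤ ∧
    ∀ N₁ N₂ : Submodule R M, IsCompl N₁ N₂ → N₁ = ⊥ ∨ N₂ = ⊥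

/-- the type of a local ring: length of Hom(k, R) -/
noncomputable def typeLen (R : Type) [CommRing R] [IsLocalRing R] : WithBot ℕ∞ :=
  mlength R ((R ⧸ IsLocalRing.maximalIdeal R) →ₗ[R] R)

theorem stmt_3 (R : Type) [CommRing R] [IsNoetherianRing R] [IsLocalRing R]
    (hm3 : (IsLocalRing.maximalIdeal R) ^ 3 = ⊥)
    (hm2 : (IsLocalRing.maximalIdeal R) ^ 2 ≠ ⊥)
    (M : Type) [AddCommGroup M] [Module R M] [Module.Finite R M]
    (hind : IsIndecomposableModule R M) (hnf : ¬ Module.Free R M)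
    (hG : GDimZero R M) :
    ((IsLocalRing.maximalIdeal R) ^ 2) • (⊤ : Submodule R M) = ⊥ := by
  classical
  by_contra hbot
  obtain ⟨r, hr, y, hry⟩ : ∃ r ∈ (IsLocalRing.maximalIdeal R) ^ 2, ∃ y : M, r • y ≠ 0 := by
    by_contra hc
    push_neg at hc
    exact hbot (eq_bot_iff.mpr (Submodule.smul_le.mpr fun r hr n _ =>
      (Submodule.mem_bot R).mpr (hc r hr n)))
  have hinj := hG.1.injective
  have hne : Module.Dual.eval R M (r • y) ≠ 0 := fun h => hry (hinj (by rw [h, map_zero]))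
  obtain ⟨f, hf⟩ : ∃ f : Module.Dual R M, f (r • y) ≠ 0 := by
    by_contra hc; push_neg at hc
    exact hne (LinearMap.ext fun f => by simpa using hc f)
  have hfy : r * f y ≠ 0 := by simpa [smul_eq_mul] using hf
  have hunit : IsUnit (f y) := by
    by_contra hu
    have hmem : f y ∈ IsLocalRing.maximalIdeal R := hu
    have hmm : r * f y ∈ (IsLocalRing.maximalIdeal R) ^ 3 := by
      rw [pow_succ]
      exact Ideal.mul_mem_mul hr hmem
    rw [hm3, Submodule.mem_bot] at hmm
    exact hfy hmm
  obtain ⟨u, hu⟩ := hunit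
  set y' : M := ((↑u⁻¹ : R)) • y with hy'
  have hfy' : f y' = 1 := by
    rw [hy', map_smul, smul_eq_mul, ← hu, Units.inv_mul]
  set g := LinearMap.toSpanSingleton R M y' with hg
  have hfg : ∀ s : R, f (g s) = s := fun s => by
    rw [hg, LinearMap.toSpanSingleton_apply, map_smul, hfy', smul_eq_mul, mul_one]
  have hcompl : IsCompl (LinearMap.ker f) (LinearMap.range g) := by
    constructor
    · rw [disjoint_iff_inf_le]
      intro z hz
      rw [Submodule.mem_inf] at hz
      obtain ⟨hz1, s, rfl⟩ := hz
      have hs : s = 0 := by rw [← hfg s]; exact LinearMap.mem_ker.mp hz1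
      simp [hs]
    · rw [codisjoint_iff_le_sup]
      intro z _
      have hker : z - g (f z) ∈ LinearMap.ker f := by
        rw [LinearMap.mem_ker, map_sub, hfg, sub_self]
      have hz : z = (z - g (f z)) + g (f z) := by abel
      rw [hz]
      exact Submodule.add_mem_sup hker ⟨f z, rfl⟩
  rcases hind.2 _ _ hcompl with hk | hrg
  · have hsurj : Function.Surjective f := fun s => ⟨g s, hfg s⟩
    have hinjf : Function.Injective f := LinearMap.ker_eq_bot.mp hk
    exact hnf (Module.Free.of_equiv (LinearEquiv.ofBijective f ⟨hinjf, hsurj⟩).symm)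
  · have h10 : (1 : R) = 0 := by
      have hg1 : g 1 ∈ LinearMap.range g := ⟨1, rfl⟩
      rw [hrg, Submodule.mem_bot] at hg1
      have := hfg 1
      rw [hg1, map_zero] at this
      exact this.symm
    have hsub : Subsingleton R := subsingleton_of_zero_eq_one h10.symm
    refine hm2 (eq_bot_iff.mpr fun x _ => ?_)
    rw [Submodule.mem_bot]
    exact Subsingleton.elim x 0
end

section
/- Let S be a one-dimensional Cohen-Macaulay homogeneous graded ring over a field k with minimal multiplicity, which is not Gorenstein, f a homogeneous non-zerodivisor of degree 2, and R = S/fS. Then there exists a nonfree finitely generated R-module of G-dimension zero. -/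
open CategoryTheory

/-- A standard graded (homogeneous) algebra over a field: the degree-0 part is k,
the algebra is generated in degree 1, and all graded pieces are finite dimensional. -/
def IsStandardGraded (k S : Type) [Field k] [CommRing S] [Algebra k S]
    (𝒮 : ℕ → Submodule k S) [GradedAlgebra 𝒮] : Prop :=
  𝒮 0 = (1 : Submodule k S) ∧ Algebra.adjoin k ((𝒮 1 : Set S)) = ⊤ ∧
    ∀ n, FiniteDimensional k ↥(𝒮 n)

/-- `GDimLE R n M` : the G-dimension of `M` over `R` is at most `n`,
i.e. an `n`-th syzygy of `M` has G-dimension zero. -/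
def GDimLE (R : Type) [CommRing R] : ℕ → ∀ (M : Type) [AddCommGroup M] [Module R M], Prop
  | 0, M, _, _ => GDimZero R M
  | n + 1, M, _, _ => ∃ (b : ℕ) (π : (Fin b → R) →ₗ[R] M),
      Function.Surjective π ∧ GDimLE R n ↥(LinearMap.ker π)

/-- `ProjDimLE S n M` : the projective dimension of `M` over `S` is at most `n`. -/
def ProjDimLE (S : Type) [CommRing S] : ℕ → ∀ (M : Type) [AddCommGroup M] [Module S M], Prop
  | 0, M, _, _ => Module.Projective S M
  | n + 1, M, _, _ => ∃ (b : ℕ) (π : (Fin b → S) →ₗ[S] M),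
      Function.Surjective π ∧ ProjDimLE S n ↥(LinearMap.ker π)

/-!
Minimal multiplicity gives `f ∈ 𝔫² = x𝔫`, so `f = x y`. Since `f` is a nonzerodivisor, the images
of `x` and `y` in `R = S/(f)` form an exact pair of zero divisors: each generates the annihilator
of the other. Then `R/(x)` has the periodic free resolution `⋯ → R --y--> R --x--> R`, whose
`R`-dual is the same periodic complex and hence exact, and `(s, r) ↦ y s r` is a symmetric pairing
identifying `R/(x)` with its dual; so `R/(x)` is totally reflexive. It is not free, because by
degree reasons the image of `x` is a nonzero nonunit of `R`.
-/

open Limits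

theorem Module.Dual.eval_bijective_of_symm {R M : Type*} [CommRing R] [AddCommGroup M]
    [Module R M] (σ : M ≃ₗ[R] Module.Dual R M) (hσ : ∀ m m', σ m m' = σ m' m) :
    Function.Bijective (Module.Dual.eval R M) := by
  have h : ⇑(Module.Dual.eval R M) = σ.dualMap.symm ∘ σ := by
    funext m
    rw [Function.comp_apply, LinearEquiv.eq_symm_apply]
    ext m'
    exact hσ m' m
  rw [h]
  exact σ.dualMap.symm.bijective.comp σ.bijective

theorem not_free_quotient_span_singleton {R : Type*} [CommRing R] {a : R} (ha : a ≠ 0)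
    (hI : Ideal.span {a} ≠ ⊤) : ¬ Module.Free R (R ⧸ Ideal.span {a}) := by
  intro _
  have : Nontrivial (R ⧸ Ideal.span {a}) := Ideal.Quotient.nontrivial_iff.2 hI
  refine ha (eq_of_smul_eq_smul (α := R ⧸ Ideal.span {a}) fun m => ?_)
  obtain ⟨r, rfl⟩ := Submodule.Quotient.mk_surjective _ m
  rw [zero_smul, ← Submodule.Quotient.mk_smul, Submodule.Quotient.mk_eq_zero]
  exact Ideal.mul_mem_right r _ (Ideal.mem_span_singleton_self a)

theorem Ideal.span_singleton_mk_ne_top {R : Type*} [CommRing R] {I J : Ideal R} (hJ : J ≠ ⊤)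
    (hIJ : I ≤ J) {x : R} (hx : x ∈ J) : Ideal.span {Ideal.Quotient.mk I x} ≠ ⊤ := by
  intro htop
  have : Ideal.span {x} ⊔ I = ⊤ := by
    rw [← Ideal.mk_ker (I := I), ← Ideal.comap_map_of_surjective' _ Ideal.Quotient.mk_surjective,
      Ideal.map_span, Set.image_singleton, htop, Ideal.comap_top]
  exact hJ (top_le_iff.1 (this ▸ sup_le ((Ideal.span_singleton_le_iff_mem J).2 hx) hIJ))

theorem Ideal.Quotient.mk_dvd_of_mk_mul_eq_zero {S : Type*} [CommRing S] {f x y r : S}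
    (hx : x ∈ nonZeroDivisors S) (hxy : x * y = f)
    (hr : Ideal.Quotient.mk (Ideal.span {f}) x * Ideal.Quotient.mk _ r = 0) :
    Ideal.Quotient.mk (Ideal.span {f}) y ∣ Ideal.Quotient.mk _ r := by
  rw [← map_mul, Ideal.Quotient.eq_zero_iff_mem, Ideal.mem_span_singleton] at hr
  obtain ⟨c, hc⟩ := hr
  have hr : r = y * c :=
    (mul_cancel_left_mem_nonZeroDivisors hx).1 (by rw [hc, ← hxy, mul_assoc])
  exact ⟨Ideal.Quotient.mk _ c, by rw [hr, map_mul]⟩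

noncomputable abbrev ModuleCat.mulLeft {R : Type} [CommRing R] (r : R) :
    ModuleCat.of R R ⟶ ModuleCat.of R R :=
  ModuleCat.ofHom (LinearMap.mulLeft R r)

structure IsExactZeroDivisorPair {R : Type*} [CommRing R] (a b : R) : Prop where
  mul_eq_zero : a * b = 0
  dvd_of_mul_left_eq_zero : ∀ r, a * r = 0 → b ∣ r
  dvd_of_mul_right_eq_zero : ∀ r, b * r = 0 → a ∣ r

namespace IsExactZeroDivisorPair

section CommRing

variable {R : Type*} [CommRing R] {a b : R}

theorem symm (h : IsExactZeroDivisorPair a b) : IsExactZeroDivisorPair b a :=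
  ⟨by rw [mul_comm, h.mul_eq_zero], h.dvd_of_mul_right_eq_zero, h.dvd_of_mul_left_eq_zero⟩

theorem quotient_mk {S : Type*} [CommRing S] {f x y : S} (hf : f ∈ nonZeroDivisors S)
    (hxy : x * y = f) :
    IsExactZeroDivisorPair (Ideal.Quotient.mk (Ideal.span {f}) x) (Ideal.Quotient.mk _ y) where
  mul_eq_zero := by
    rw [← map_mul, hxy, Ideal.Quotient.eq_zero_iff_mem]
    exact Ideal.mem_span_singleton_self f
  dvd_of_mul_left_eq_zero := by
    rintro ⟨r⟩
    exact Ideal.Quotient.mk_dvd_of_mk_mul_eq_zero (mul_mem_nonZeroDivisors.1 (hxy ▸ hf)).1 hxy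
  dvd_of_mul_right_eq_zero := by
    rintro ⟨r⟩
    exact Ideal.Quotient.mk_dvd_of_mk_mul_eq_zero (mul_mem_nonZeroDivisors.1 (hxy ▸ hf)).2
      (mul_comm x y ▸ hxy)

theorem range_mulLeft_eq_ker (h : IsExactZeroDivisorPair a b) :
    LinearMap.range (LinearMap.mulLeft R b) = LinearMap.ker (LinearMap.mulLeft R a) := by
  ext r
  simp only [LinearMap.mem_range, LinearMap.mem_ker, LinearMap.mulLeft_apply]
  constructor
  · rintro ⟨s, rfl⟩
    rw [← mul_assoc, h.mul_eq_zero, zero_mul]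
  · intro hr
    obtain ⟨s, rfl⟩ := h.dvd_of_mul_left_eq_zero r hr
    exact ⟨s, rfl⟩

noncomputable def toDual (h : IsExactZeroDivisorPair a b) :
    (R ⧸ Ideal.span {a}) →ₗ[R] Module.Dual R (R ⧸ Ideal.span {a}) :=
  let ρ : Module.Dual R (R ⧸ Ideal.span {a}) := Submodule.liftQSpanSingleton a
    (LinearMap.mulLeft R b) (by rw [LinearMap.mulLeft_apply, mul_comm, h.mul_eq_zero])
  Submodule.liftQSpanSingleton a (LinearMap.toSpanSingleton R _ ρ) (by
    ext
    change a * (b * 1) = 0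
    rw [← mul_assoc, h.mul_eq_zero, zero_mul])

theorem toDual_mk_mk (h : IsExactZeroDivisorPair a b) (s r : R) :
    h.toDual (Submodule.Quotient.mk s) (Submodule.Quotient.mk r) = s * (b * r) := rfl

theorem toDual_comm (h : IsExactZeroDivisorPair a b) (m m' : R ⧸ Ideal.span {a}) :
    h.toDual m m' = h.toDual m' m := by
  obtain ⟨s, rfl⟩ := Submodule.Quotient.mk_surjective _ m
  obtain ⟨r, rfl⟩ := Submodule.Quotient.mk_surjective _ m'
  rw [toDual_mk_mk, toDual_mk_mk]
  ring

theorem toDual_bijective (h : IsExactZeroDivisorPair a b) : Function.Bijective h.toDual := by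
  refine ⟨(injective_iff_map_eq_zero _).2 fun m hm => ?_, fun φ => ?_⟩
  · obtain ⟨s, rfl⟩ := Submodule.Quotient.mk_surjective _ m
    have hs : b * s = 0 := by
      have := LinearMap.congr_fun hm (Submodule.Quotient.mk 1)
      rwa [toDual_mk_mk, LinearMap.zero_apply, mul_one, mul_comm] at this
    obtain ⟨c, rfl⟩ := h.dvd_of_mul_right_eq_zero s hs
    exact (Submodule.Quotient.mk_eq_zero _).2
      (Ideal.mul_mem_right c _ (Ideal.mem_span_singleton_self a))
  · have hφ : a * φ (Submodule.Quotient.mk 1) = 0 := by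
      rw [← smul_eq_mul, ← map_smul, ← Submodule.Quotient.mk_smul, smul_eq_mul, mul_one,
        (Submodule.Quotient.mk_eq_zero _).2 (Ideal.mem_span_singleton_self a), map_zero]
    obtain ⟨c, hc⟩ := h.dvd_of_mul_left_eq_zero _ hφ
    refine ⟨Submodule.Quotient.mk c, LinearMap.ext fun m => ?_⟩
    obtain ⟨r, rfl⟩ := Submodule.Quotient.mk_surjective _ m
    rw [toDual_mk_mk, ← mul_one r, ← smul_eq_mul r 1, Submodule.Quotient.mk_smul, map_smul, hc,
      smul_eq_mul]
    ring

end CommRing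

variable {R : Type} [CommRing R] {a b : R}

theorem mulLeft_comp_mulLeft (h : IsExactZeroDivisorPair a b) : ModuleCat.mulLeft b ≫ ModuleCat.mulLeft a = 0 := by
  ext
  simp [h.mul_eq_zero]

theorem exact_mulLeft (h : IsExactZeroDivisorPair a b) :
    (ShortComplex.mk _ _ h.mulLeft_comp_mulLeft).Exact := by
  rw [ShortComplex.moduleCat_exact_iff_range_eq_ker]
  exact h.range_mulLeft_eq_ker

theorem exactAt_alternatingConst {c : ComplexShape ℕ} [DecidableRel c.Rel]
    (hc : ∀ i j, c.Rel i j → Odd (i + j)) (h : IsExactZeroDivisorPair a b) {i j k : ℕ}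
    (hij : c.Rel i j) (hjk : c.Rel j k) :
    (HomologicalComplex.alternatingConst (ModuleCat.of R R) h.symm.mulLeft_comp_mulLeft
      h.mulLeft_comp_mulLeft hc).ExactAt j := by
  rw [HomologicalComplex.exactAt_iff' _ i j k (c.prev_eq' hij) (c.next_eq' hjk)]
  rcases j.even_or_odd with hj | hj
  · exact (ShortComplex.exact_iff_of_iso
      (HomologicalComplex.alternatingConstScIsoEven _ _ _ hc hij hjk hj)).2 h.exact_mulLeft
  · exact (ShortComplex.exact_iff_of_iso
      (HomologicalComplex.alternatingConstScIsoOdd _ _ _ hc hij hjk hj)).2 h.symm.exact_mulLeft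

/-- `⋯ --a--> R --b--> R --a--> R`, with `a` in degree `1`: a free resolution of `R/(a)`. -/
noncomputable abbrev periodicComplex (h : IsExactZeroDivisorPair a b) :
    ChainComplex (ModuleCat R) ℕ :=
  HomologicalComplex.alternatingConst (ModuleCat.of R R) h.mulLeft_comp_mulLeft
    h.symm.mulLeft_comp_mulLeft fun _ _ => ComplexShape.down_nat_odd_add

noncomputable def periodicResolution.π (h : IsExactZeroDivisorPair a b) :
    h.periodicComplex ⟶ (ChainComplex.single₀ (ModuleCat R)).obj
      (ModuleCat.of R (R ⧸ Ideal.span {a})) :=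
  (h.periodicComplex.toSingle₀Equiv _).symm ⟨ModuleCat.ofHom (Ideal.span {a}).mkQ, by
    ext
    change Submodule.Quotient.mk (a * 1) = 0
    simp⟩

theorem periodicResolution.quasiIso_π (h : IsExactZeroDivisorPair a b) :
    QuasiIso (periodicResolution.π h) where
  quasiIsoAt n := by
    cases n with
    | zero =>
      rw [ChainComplex.quasiIsoAt₀_iff, ShortComplex.quasiIso_iff_of_zeros' _ rfl rfl rfl]
      constructor
      · have : LinearMap.range (LinearMap.mulLeft R a) = LinearMap.ker (Ideal.span {a}).mkQ := by
          rw [Submodule.ker_mkQ]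
          ext
          simp [Ideal.mem_span_singleton', mul_comm]
        rw [ShortComplex.moduleCat_exact_iff_range_eq_ker]
        exact this
      · rw [ModuleCat.epi_iff_surjective]
        exact Submodule.mkQ_surjective (Ideal.span {a})
    | succ n =>
      rw [quasiIsoAt_iff_exactAt' (hL := ChainComplex.exactAt_succ_single_obj ..)]
      exact h.symm.exactAt_alternatingConst _ (i := n + 2) (k := n) rfl rfl

noncomputable def periodicResolution (h : IsExactZeroDivisorPair a b) :
    ProjectiveResolution (ModuleCat.of R (R ⧸ Ideal.span {a})) where
  complex := h.periodicComplex
  projective _ := inferInstanceAs (Projective (ModuleCat.of R R))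
  π := periodicResolution.π h
  quasiIso := periodicResolution.quasiIso_π h

/-- Under `Hom(R, R) ≅ R`, precomposition with multiplication by `r` is multiplication by `r`. -/
noncomputable def linearYonedaObjPeriodicComplexIso (h : IsExactZeroDivisorPair a b) :
    h.periodicComplex.linearYonedaObj R (ModuleCat.of R R) ≅
      HomologicalComplex.alternatingConst (ModuleCat.of R R) h.symm.mulLeft_comp_mulLeft
        h.mulLeft_comp_mulLeft fun _ _ => ComplexShape.up_nat_odd_add :=
  HomologicalComplex.Hom.isoOfComponents
    (fun _ => (ModuleCat.homLinearEquiv.trans (LinearMap.ringLmapEquivSelf R R R)).toModuleIso) <| by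
    rintro i j ⟨rfl⟩
    ext (φ : ModuleCat.of R R ⟶ ModuleCat.of R R)
    by_cases hi : Even i
    · simp [hi, Nat.even_add_one, ModuleCat.homLinearEquiv]
      exact (φ.hom.map_smul a 1).symm
    · simp [hi, Nat.even_add_one, ModuleCat.homLinearEquiv]
      exact (φ.hom.map_smul b 1).symm

theorem isZero_ext_succ (h : IsExactZeroDivisorPair a b) (n : ℕ) :
    IsZero (((Ext R (ModuleCat R) (n + 1)).obj
      (Opposite.op (ModuleCat.of R (R ⧸ Ideal.span {a})))).obj (ModuleCat.of R R)) := by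
  refine IsZero.of_iso ?_ (h.periodicResolution.isoExt (n + 1) _ ≪≫
    HomologicalComplex.homologyMapIso h.linearYonedaObjPeriodicComplexIso (n + 1))
  rw [← HomologicalComplex.exactAt_iff_isZero_homology]
  exact h.exactAt_alternatingConst _ (i := n) (k := n + 2) rfl rfl

theorem gDimZero (h : IsExactZeroDivisorPair a b) : GDimZero R (R ⧸ Ideal.span {a}) := by
  let σ := LinearEquiv.ofBijective h.toDual h.toDual_bijective
  refine ⟨Module.Dual.eval_bijective_of_symm σ h.toDual_comm, fun i hi => ?_, fun i hi => ?_⟩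
  all_goals obtain ⟨n, rfl⟩ := Nat.exists_eq_add_one.2 hi
  · exact ModuleCat.subsingleton_of_isZero (h.isZero_ext_succ n)
  · exact ModuleCat.subsingleton_of_isZero <| (h.isZero_ext_succ n).of_iso
      (((Ext R (ModuleCat R) (n + 1)).mapIso σ.toModuleIso.op).app _)

end IsExactZeroDivisorPair

section Graded

variable {k S : Type*} [CommRing k] [CommRing S] [Algebra k S] (𝒮 : ℕ → Submodule k S)
  [GradedAlgebra 𝒮]

theorem GradedAlgebra.mem_pow_of_adjoin_eq_top {I : Ideal S} (hI : ∀ z ∈ 𝒮 1, z ∈ I)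
    (hgen : Algebra.adjoin k (𝒮 1 : Set S) = ⊤) {n : ℕ} {z : S} (hz : z ∈ 𝒮 n) : z ∈ I ^ n := by
  have hword : ∀ w ∈ Submonoid.closure (𝒮 1 : Set S), ∃ d, w ∈ 𝒮 d ∧ w ∈ I ^ d := by
    intro w hw
    induction hw using Submonoid.closure_induction with
    | mem w hw => exact ⟨1, hw, by simpa using hI w hw⟩
    | one => exact ⟨0, SetLike.one_mem_graded 𝒮, by simp⟩
    | mul w w' _ _ ih ih' =>
      obtain ⟨d, hwd, hwI⟩ := ih
      obtain ⟨d', hwd', hwI'⟩ := ih'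
      exact ⟨d + d', SetLike.mul_mem_graded hwd hwd', pow_add I d d' ▸ Ideal.mul_mem_mul hwI hwI'⟩
  have hspan : Submodule.span k (Submonoid.closure (𝒮 1 : Set S) : Set S) ≤
      ((I ^ n).restrictScalars k).comap (GradedAlgebra.proj 𝒮 n) := by
    rw [Submodule.span_le]
    intro w hw
    obtain ⟨d, hwd, hwI⟩ := hword w hw
    simp only [SetLike.mem_coe, Submodule.mem_comap, Submodule.restrictScalars_mem,
      GradedAlgebra.proj_apply]
    rcases eq_or_ne d n with rfl | hdn
    · rwa [DirectSum.decompose_of_mem_same 𝒮 hwd]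
    · rw [DirectSum.decompose_of_mem_ne 𝒮 hwd hdn]
      exact Ideal.zero_mem _
  have hz' := hspan (x := z) (by rw [← Algebra.adjoin_eq_span, hgen]; trivial)
  rwa [Submodule.mem_comap, GradedAlgebra.proj_apply, DirectSum.decompose_of_mem_same 𝒮 hz]
    at hz'

theorem GradedAlgebra.eq_zero_of_mem_span_singleton_of_lt {i j : ℕ} {x f : S} (hx : x ∈ 𝒮 i)
    (hf : f ∈ 𝒮 j) (hij : i < j) (h : x ∈ Ideal.span {f}) : x = 0 := by
  obtain ⟨c, rfl⟩ := Ideal.mem_span_singleton'.1 h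
  rw [← DirectSum.decompose_of_mem_same 𝒮 hx]
  exact DirectSum.coe_decompose_mul_of_right_mem_of_not_le 𝒮 hf (not_le.2 hij)

theorem HomogeneousIdeal.toIdeal_irrelevant_ne_top [Nontrivial S] :
    (HomogeneousIdeal.irrelevant 𝒮).toIdeal ≠ ⊤ := by
  rw [Ne, Ideal.eq_top_iff_one]
  change (1 : S) ∉ HomogeneousIdeal.irrelevant 𝒮
  rw [HomogeneousIdeal.mem_irrelevant_iff, GradedRing.proj_apply,
    DirectSum.decompose_of_mem_same 𝒮 (SetLike.one_mem_graded 𝒮)]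
  exact one_ne_zero

end Graded

theorem stmt_16_general (k S : Type) [Field k] [CommRing S] [Algebra k S]
    (𝒮 : ℕ → Submodule k S) [GradedAlgebra 𝒮] (hSG : IsStandardGraded k S 𝒮)
    (hdim : ringKrullDim S = 1)
    (hMM : ∃ x ∈ 𝒮 1, x ∈ nonZeroDivisors S ∧
      Ideal.span {x} * (HomogeneousIdeal.irrelevant 𝒮).toIdeal =
        (HomogeneousIdeal.irrelevant 𝒮).toIdeal ^ 2)
    (f : S) (hf2 : f ∈ 𝒮 2) (hfnzd : f ∈ nonZeroDivisors S) :
    ∃ M : ModuleCat (S ⧸ Ideal.span {f}),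
      Module.Finite (S ⧸ Ideal.span {f}) M ∧
      GDimZero (S ⧸ Ideal.span {f}) M ∧
      ¬ Module.Free (S ⧸ Ideal.span {f}) M := by
  have : Nontrivial S := not_subsingleton_iff_nontrivial.1 fun _ => by
    simp [ringKrullDim_eq_bot_of_subsingleton] at hdim
  obtain ⟨x, hx1, hx, hxm⟩ := hMM
  have hm {i : ℕ} (hi : 0 < i) (z : S) (hz : z ∈ 𝒮 i) :
      z ∈ (HomogeneousIdeal.irrelevant 𝒮).toIdeal :=
    HomogeneousIdeal.mem_irrelevant_of_mem 𝒮 hi hz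
  have hfm : f ∈ Ideal.span {x} * (HomogeneousIdeal.irrelevant 𝒮).toIdeal := by
    rw [hxm]
    exact GradedAlgebra.mem_pow_of_adjoin_eq_top 𝒮 (hm one_pos) hSG.2.1 hf2
  obtain ⟨y, hxy⟩ := Ideal.mem_span_singleton.1 (Ideal.mul_le_left hfm)
  have hpair := IsExactZeroDivisorPair.quotient_mk hfnzd hxy.symm
  refine ⟨ModuleCat.of _ (_ ⧸ Ideal.span {Ideal.Quotient.mk _ x}), inferInstance, hpair.gDimZero,
    not_free_quotient_span_singleton ?_ ?_⟩
  · rw [Ne, Ideal.Quotient.eq_zero_iff_mem]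
    exact fun h => nonZeroDivisors.ne_zero hx
      (GradedAlgebra.eq_zero_of_mem_span_singleton_of_lt 𝒮 hx1 hf2 one_lt_two h)
  · exact Ideal.span_singleton_mk_ne_top (HomogeneousIdeal.toIdeal_irrelevant_ne_top 𝒮)
      ((Ideal.span_singleton_le_iff_mem _).2 (hm two_pos f hf2)) (hm one_pos x hx1)

/-- if S is a non-Gorenstein one-dimensional CM standard graded algebra
with minimal multiplicity and f is a degree-2 homogeneous nonzerodivisor, then
R = S/fS possesses a nonfree finitely generated module of G-dimension zero. -/
theorem stmt_16 (k S : Type) [Field k] [CommRing S] [Algebra k S]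
    (𝒮 : ℕ → Submodule k S) [GradedAlgebra 𝒮] (hSG : IsStandardGraded k S 𝒮)
    (hdim : ringKrullDim S = 1)
    (hMM : ∃ x ∈ 𝒮 1, x ∈ nonZeroDivisors S ∧
      Ideal.span {x} * (HomogeneousIdeal.irrelevant 𝒮).toIdeal =
        (HomogeneousIdeal.irrelevant 𝒮).toIdeal ^ 2)
    (hng : ¬ HasFiniteSelfInjDim S)
    (f : S) (hf2 : f ∈ 𝒮 2) (hfnzd : f ∈ nonZeroDivisors S) :
    ∃ M : ModuleCat (S ⧸ Ideal.span {f}),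
      Module.Finite (S ⧸ Ideal.span {f}) M ∧
      GDimZero (S ⧸ Ideal.span {f}) M ∧
      ¬ Module.Free (S ⧸ Ideal.span {f}) M :=
  stmt_16_general k S 𝒮 hSG hdim hMM f hf2 hfnzd
end
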